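/- Let 1 ≤ p < ∞ and let w be a log-convex weight on [0, ∞). If the differentiation operator is bounded on H_w^p(ℂ), then there is C > 0 with log w(r) ≤ C r for all r ≥ 1. -/

import Mathlib

open Complex MeasureTheory Real Set Filter
open scoped ENNReal Topology

noncomputable section

/-- The domain: disk of radius `rmax` (`rmax = 1` is the unit disk, `rmax = ⊤` is ℂ). -/
def Dom (rmax : ℝ≥0∞) : Set ℂ := {z : ℂ | ENNReal.ofReal ‖z‖ < rmax}

/-- The integral mean `M_p(f, r)` for `0 < p < ∞`. -/
def Mp (p : ℝ) (f : ℂ → ℂ) (r : ℝ) : ℝ :=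
  ((1 / (2 * π)) * ∫ θ in (0:ℝ)..(2 * π), ‖f ((r : ℂ) * Complex.exp ((θ : ℂ) * Complex.I))‖ ^ p)
    ^ (1 / p)

/-- The sup mean `M_∞(f, r)`. -/
def Minf (f : ℂ → ℂ) (r : ℝ) : ℝ :=
  ⨆ θ : ℝ, ‖f ((r : ℂ) * Complex.exp ((θ : ℂ) * Complex.I))‖

/-- A weight on `[0, rmax)`: positive, non-decreasing, continuous, unbounded. -/
structure IsWeight (rmax : ℝ≥0∞) (w : ℝ → ℝ) : Prop where
  pos : ∀ r, 0 ≤ r → ENNReal.ofReal r < rmax → 0 < w r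
  mono : ∀ r s, 0 ≤ r → r ≤ s → ENNReal.ofReal s < rmax → w r ≤ w s
  cont : ContinuousOn w {r : ℝ | 0 ≤ r ∧ ENNReal.ofReal r < rmax}
  unbdd : ∀ M : ℝ, ∃ r, 0 ≤ r ∧ ENNReal.ofReal r < rmax ∧ M < w r

/-- `log w(e^x)` is convex on the appropriate interval. -/
def LogConvexOn (rmax : ℝ≥0∞) (w : ℝ → ℝ) : Prop :=
  ConvexOn ℝ {x : ℝ | ENNReal.ofReal (Real.exp x) < rmax}
    (fun x => Real.log (w (Real.exp x)))

/-- The integration operator `J f(z) = ∫₀^z f(ζ) dζ` (along the segment from 0 to z). -/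
def Jop (f : ℂ → ℂ) (z : ℂ) : ℂ := ∫ t in (0:ℝ)..1, z * f ((t : ℂ) * z)

/-- The associated weight `w̃` (for `p = ∞`). -/
def assocInf (rmax : ℝ≥0∞) (w : ℝ → ℝ) (t : ℝ) : ℝ :=
  sSup {m : ℝ | ∃ f : ℂ → ℂ, DifferentiableOn ℂ f (Dom rmax) ∧
    (∀ r, 0 ≤ r → ENNReal.ofReal r < rmax → Minf f r ≤ w r) ∧ m = Minf f t}

/-- The `p`-associated weight `w̃_p` for `0 < p < ∞`. -/
def assocP (rmax : ℝ≥0∞) (p : ℝ) (w : ℝ → ℝ) (t : ℝ) : ℝ :=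
  sSup {m : ℝ | ∃ f : ℂ → ℂ, DifferentiableOn ℂ f (Dom rmax) ∧
    (∀ r, 0 ≤ r → ENNReal.ofReal r < rmax → Mp p f r ≤ w r) ∧ m = Mp p f t}


/-! In the coordinates `φ x = log w(eˣ)` the weight is convex, and `log r = o(log w(r))` makes
`φ` superlinear, so `c = inf_y (φ y - n y)` is finite and `e^c zⁿ` lies in the unit ball of
`H_w^p`. Applying the bounded operator `D` to it gives `log n + c + (n - 1) y ≤ log K + φ y`
for all `y`, which keeps every near-minimiser of `φ y - n y` to the right of
`log (n / K) - 1`. If `φ` gains at least `n` over `[x, x + 1]`, convexity puts such a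
near-minimiser left of `x + 1`; hence `n ≤ K e^{x+2}`. So `φ` grows by `O(eˣ)` on
`[x, x + 1]`, and summing gives `φ x = O(eˣ)`, i.e. `log w(r) = O(r)`. -/

section Monomials

variable {p : ℝ} {w : ℝ → ℝ} {K : ℝ}

lemma Mp_const_mul_pow (hp : p ≠ 0) (c : ℂ) (n : ℕ) {r : ℝ} (hr : 0 ≤ r) :
    Mp p (fun z => c * z ^ n) r = ‖c‖ * r ^ n := by
  have hnorm (θ : ℝ) : ‖c * ((r : ℂ) * Complex.exp (θ * I)) ^ n‖ = ‖c‖ * r ^ n := by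
    simp [norm_exp_ofReal_mul_I, abs_of_nonneg hr]
  simp only [Mp, hnorm, intervalIntegral.integral_const, smul_eq_mul, sub_zero]
  rw [← mul_assoc, one_div_mul_cancel (by positivity), one_mul, ← rpow_mul (by positivity),
    mul_one_div_cancel hp, rpow_one]

lemma monomial_deriv_le (hp : p ≠ 0)
    (hD : ∀ f : ℂ → ℂ, Differentiable ℂ f → (∀ r, 0 ≤ r → Mp p f r ≤ w r) →
      ∀ r, 0 ≤ r → Mp p (deriv f) r ≤ K * w r)
    (c : ℂ) (n : ℕ) (hc : ∀ r, 0 ≤ r → ‖c‖ * r ^ n ≤ w r) {r : ℝ} (hr : 0 ≤ r) :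
    ‖c‖ * n * r ^ (n - 1) ≤ K * w r := by
  have hderiv : deriv (fun z : ℂ => c * z ^ n) = fun z => c * n * z ^ (n - 1) := by
    ext z
    rw [deriv_const_mul_field, deriv_pow_field, mul_assoc]
  have h := hD _ ((differentiable_pow n).const_mul c)
    (fun r hr => (Mp_const_mul_pow hp c n hr).trans_le (hc r hr)) r hr
  rwa [hderiv, Mp_const_mul_pow hp _ _ hr, norm_mul, Complex.norm_natCast] at h

lemma exp_mul_pow_le (hwpos : ∀ r, 0 ≤ r → 0 < w r) {n : ℕ} (hn : n ≠ 0) {c : ℝ}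
    (hc : ∀ y, c ≤ Real.log (w (Real.exp y)) - n * y) {r : ℝ} (hr : 0 ≤ r) :
    Real.exp c * r ^ n ≤ w r := by
  rcases hr.eq_or_lt with rfl | hr
  · simpa [hn] using (hwpos 0 le_rfl).le
  calc Real.exp c * r ^ n = Real.exp (c + n * Real.log r) := by
        rw [Real.exp_add, ← Real.log_pow, Real.exp_log (pow_pos hr n)]
    _ ≤ Real.exp (Real.log (w r)) := by
        gcongr
        have := hc (Real.log r)
        rw [Real.exp_log hr] at this
        linarith
    _ = w r := Real.exp_log (hwpos r hr.le)

lemma log_add_le_of_deriv_bounded (hp : p ≠ 0) (hK : 0 < K)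
    (hD : ∀ f : ℂ → ℂ, Differentiable ℂ f → (∀ r, 0 ≤ r → Mp p f r ≤ w r) →
      ∀ r, 0 ≤ r → Mp p (deriv f) r ≤ K * w r)
    (hwpos : ∀ r, 0 ≤ r → 0 < w r) {n : ℕ} (hn : 1 ≤ n) {c : ℝ}
    (hc : ∀ y, c ≤ Real.log (w (Real.exp y)) - n * y) (y : ℝ) :
    Real.log n + c + (n - 1) * y ≤ Real.log K + Real.log (w (Real.exp y)) := by
  have hnorm : ‖((Real.exp c : ℝ) : ℂ)‖ = Real.exp c := by
    rw [Complex.norm_real, norm_of_nonneg (Real.exp_pos c).le]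
  have h := monomial_deriv_le hp hD _ n
    (fun r hr => hnorm ▸ exp_mul_pow_le hwpos (by omega) hc hr) (Real.exp_pos y).le
  rw [hnorm] at h
  have hlog := log_le_log (by positivity) h
  rwa [Real.log_mul (by positivity) (by positivity), Real.log_mul (by positivity) (by positivity),
    Real.log_mul hK.ne' (hwpos _ (Real.exp_pos y).le).ne', Real.log_exp, ← Real.exp_nat_mul,
    Real.log_exp, Nat.cast_sub hn, Nat.cast_one, add_comm c] at hlog

lemma pos_of_deriv_bounded (hp : p ≠ 0)
    (hD : ∀ f : ℂ → ℂ, Differentiable ℂ f → (∀ r, 0 ≤ r → Mp p f r ≤ w r) →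
      ∀ r, 0 ≤ r → Mp p (deriv f) r ≤ K * w r)
    (hwpos : ∀ r, 0 ≤ r → 0 < w r)
    (hbdd : BddBelow (range fun y => Real.log (w (Real.exp y)) - (1 : ℕ) * y)) : 0 < K := by
  obtain ⟨c, hc⟩ := hbdd
  have hnorm : ‖((Real.exp c : ℝ) : ℂ)‖ = Real.exp c := by
    rw [Complex.norm_real, norm_of_nonneg (Real.exp_pos c).le]
  have h := monomial_deriv_le hp hD _ 1
    (fun r hr => hnorm ▸ exp_mul_pow_le hwpos one_ne_zero (fun _ => hc ⟨_, rfl⟩) hr) le_rfl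
  rw [hnorm, Nat.cast_one, mul_one, pow_zero, mul_one] at h
  exact pos_of_mul_pos_left ((Real.exp_pos c).trans_le h) (hwpos 0 le_rfl).le

end Monomials

section ConvexGrowth

variable {φ : ℝ → ℝ}

lemma bddBelow_range_sub_mul {m s : ℝ} (hm : ∀ y, m ≤ φ y) (hs : 0 ≤ s)
    (h : ∀ᶠ y in atTop, s * y ≤ φ y) : BddBelow (range fun y => φ y - s * y) := by
  obtain ⟨Y, hY⟩ := eventually_atTop.1 h
  refine ⟨min 0 (m - s * Y), ?_⟩
  rintro _ ⟨y, rfl⟩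
  rcases le_total Y y with hy | hy
  · exact (min_le_left _ _).trans (by linarith [hY y hy])
  · exact (min_le_right _ _).trans (by nlinarith [hm y])

lemma log_le_of_natCast_le_sub (hφ : ConvexOn ℝ univ φ) {K : ℝ} {n : ℕ}
    (hbdd : BddBelow (range fun y => φ y - n * y))
    (htest : ∀ c, (∀ y, c ≤ φ y - n * y) →
      ∀ y, Real.log n + c + (n - 1) * y ≤ Real.log K + φ y)
    {x : ℝ} (hx : n ≤ φ (x + 1) - φ x) : Real.log n ≤ Real.log K + x + 2 := by
  set a := ⨅ y, φ y - n * y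
  have ha := htest a fun y => ciInf_le hbdd y
  by_contra! h
  have hleft : ∀ y ≤ x + 1, a + 1 ≤ φ y - n * y := fun y hy => by linarith [ha y]
  have hall : ∀ y, a + 1 ≤ φ y - n * y := by
    intro y
    rcases le_or_gt y (x + 1) with hy | hy
    · exact hleft y hy
    have hsec := hφ.secant_mono_aux2 (mem_univ x) (mem_univ y) (by linarith) hy
    rw [add_sub_cancel_left, div_one, le_div_iff₀ (by linarith)] at hsec
    nlinarith [hleft x (by linarith)]
  linarith [le_ciInf hall]

lemma sub_le_mul_exp (hφ : ConvexOn ℝ univ φ) {K : ℝ} (hK : 0 < K)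
    (hbdd : ∀ n : ℕ, BddBelow (range fun y => φ y - n * y))
    (htest : ∀ n : ℕ, 1 ≤ n → ∀ c, (∀ y, c ≤ φ y - n * y) →
      ∀ y, Real.log n + c + (n - 1) * y ≤ Real.log K + φ y)
    {x : ℝ} (hx : 0 ≤ x) : φ (x + 1) - φ x ≤ (K * Real.exp 2 + 1) * Real.exp x := by
  have hex : 1 ≤ Real.exp x := Real.one_le_exp hx
  have hKex : 0 < K * Real.exp 2 * Real.exp x := by positivity
  rw [add_mul, one_mul]
  rcases lt_or_ge (φ (x + 1) - φ x) 1 with ht | ht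
  · linarith
  set n := ⌊φ (x + 1) - φ x⌋₊
  have hn : 1 ≤ n := Nat.le_floor (by exact_mod_cast ht)
  have hlog := log_le_of_natCast_le_sub hφ (hbdd n) (htest n hn) (Nat.floor_le (by linarith))
  have hnK : (n : ℝ) ≤ K * Real.exp 2 * Real.exp x :=
    calc (n : ℝ) = Real.exp (Real.log n) := (Real.exp_log (by positivity)).symm
      _ ≤ Real.exp (Real.log K + x + 2) := Real.exp_le_exp.2 hlog
      _ = K * Real.exp 2 * Real.exp x := by
        rw [Real.exp_add, Real.exp_add, Real.exp_log hK]; ring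
  linarith [Nat.lt_floor_add_one (φ (x + 1) - φ x)]

lemma le_mul_exp_of_sub_le (hmono : Monotone φ) {D : ℝ} (hD : 0 < D)
    (hstep : ∀ x, 0 ≤ x → φ (x + 1) - φ x ≤ D * Real.exp x) :
    ∃ C > 0, ∀ x, 0 ≤ x → φ x ≤ C * Real.exp x := by
  have hnat (m : ℕ) : φ m ≤ φ 0 + D * Real.exp m := by
    induction m with
    | zero => simp [hD.le]
    | succ m ih =>
      have h2 : 2 * Real.exp m ≤ Real.exp (m + 1) := by
        rw [Real.exp_add]
        nlinarith [Real.exp_one_gt_d9, Real.exp_pos m]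
      push_cast
      nlinarith [hstep m m.cast_nonneg]
  refine ⟨|φ 0| + D * Real.exp 1, by positivity, fun x hx => ?_⟩
  have hceil : Real.exp ⌈x⌉₊ ≤ Real.exp 1 * Real.exp x := by
    rw [← Real.exp_add]
    exact Real.exp_le_exp.2 (by linarith [Nat.ceil_lt_add_one hx])
  have h0 : φ 0 ≤ |φ 0| * Real.exp x :=
    (le_abs_self _).trans (le_mul_of_one_le_right (abs_nonneg _) (Real.one_le_exp hx))
  nlinarith [hmono (Nat.le_ceil x), hnat ⌈x⌉₊]

end ConvexGrowth

section Weight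

variable {w : ℝ → ℝ}

lemma LogConvexOn.convexOn_univ (h : LogConvexOn ⊤ w) :
    ConvexOn ℝ univ fun x => Real.log (w (Real.exp x)) := by
  simpa [LogConvexOn] using h

lemma IsWeight.monotone_log_comp_exp (hw : IsWeight ⊤ w) :
    Monotone fun x => Real.log (w (Real.exp x)) := fun x _ hxy =>
  log_le_log (hw.pos _ (Real.exp_pos x).le ENNReal.ofReal_lt_top)
    (hw.mono _ _ (Real.exp_pos x).le (Real.exp_le_exp.2 hxy) ENNReal.ofReal_lt_top)

lemma IsWeight.log_le_log_comp_exp (hw : IsWeight ⊤ w) (y : ℝ) :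
    Real.log (w 0) ≤ Real.log (w (Real.exp y)) :=
  log_le_log (hw.pos 0 le_rfl ENNReal.ofReal_lt_top)
    (hw.mono _ _ le_rfl (Real.exp_pos y).le ENNReal.ofReal_lt_top)

lemma IsWeight.eventually_one_le (hw : IsWeight ⊤ w) : ∀ᶠ r in atTop, 1 ≤ w r := by
  obtain ⟨r₁, hr₁, -, h₁⟩ := hw.unbdd 1
  filter_upwards [eventually_ge_atTop r₁] with r hr
  exact h₁.le.trans (hw.mono _ _ hr₁ hr ENNReal.ofReal_lt_top)

lemma IsWeight.eventually_mul_le_log_comp_exp (hw : IsWeight ⊤ w)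
    (hgrowth : (fun r : ℝ => Real.log r) =o[atTop] (fun r => Real.log (w r))) (s : ℝ) :
    ∀ᶠ y in atTop, s * y ≤ Real.log (w (Real.exp y)) := by
  filter_upwards [(hgrowth.comp_tendsto tendsto_exp_atTop).def (c := 1 / (|s| + 1)) (by positivity),
    tendsto_exp_atTop.eventually hw.eventually_one_le, eventually_ge_atTop 0] with y hy h1 hy0
  simp only [Function.comp, Real.log_exp, norm_of_nonneg hy0,
    norm_of_nonneg (Real.log_nonneg h1)] at hy
  rw [one_div_mul_eq_div, le_div_iff₀ (by positivity)] at hy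
  nlinarith [le_abs_self s]

end Weight

/-- for `1 ≤ p < ∞` and a log-convex weight `w` on `[0,∞)`, if
differentiation is bounded on `H_w^p(ℂ)`, then `log w(r) ≤ C r` for `r ≥ 1`. -/
theorem stmt_18 (p : ℝ) (hp : 1 ≤ p) (w : ℝ → ℝ) (hw : IsWeight ⊤ w)
    (hgrowth : (fun r : ℝ => Real.log r) =o[atTop] (fun r => Real.log (w r)))
    (hlc : LogConvexOn ⊤ w)
    (K : ℝ)
    (hbdd : ∀ f : ℂ → ℂ, Differentiable ℂ f →
      (∀ r, 0 ≤ r → Mp p f r ≤ w r) →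
      ∀ r, 0 ≤ r → Mp p (deriv f) r ≤ K * w r) :
    ∃ C > 0, ∀ r : ℝ, 1 ≤ r → Real.log (w r) ≤ C * r := by
  have hp0 : p ≠ 0 := by linarith
  have hwpos (r : ℝ) (hr : 0 ≤ r) : 0 < w r := hw.pos r hr ENNReal.ofReal_lt_top
  have hbddBelow (n : ℕ) : BddBelow (range fun y => Real.log (w (Real.exp y)) - n * y) :=
    bddBelow_range_sub_mul hw.log_le_log_comp_exp n.cast_nonneg
      (hw.eventually_mul_le_log_comp_exp hgrowth n)
  have hK : 0 < K := pos_of_deriv_bounded hp0 hbdd hwpos (hbddBelow 1)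
  obtain ⟨C, hC, hφC⟩ := le_mul_exp_of_sub_le hw.monotone_log_comp_exp (by positivity)
    fun x hx => sub_le_mul_exp hlc.convexOn_univ hK hbddBelow
      (fun n hn c hc => log_add_le_of_deriv_bounded hp0 hK hbdd hwpos hn hc) hx
  refine ⟨C, hC, fun r hr => ?_⟩
  simpa [Real.exp_log (by linarith : 0 < r)] using hφC (Real.log r) (Real.log_nonneg hr)
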